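/- Let j : A → B and i : V → W be monomorphisms of simplicial profinite sets. Then the induced pushout-product map (A × W) ⊔_{A × V} (B × V) → B × W is a monomorphism of simplicial profinite sets. -/

import Mathlib

/-!
Levelwise and on underlying sets, the square `A × V ⟶ A × W`, `B × V ⟶ B × W` is a pullback
whose sides into `B × W` are injective, and the two legs of the pushout are jointly surjective,
because a jointly epimorphic finite family in `Profinite` is jointly surjective. Two points of the
pushout with the same image in `B × W` therefore either come from the same leg, which maps
injectively, or from different legs, where the pullback property gives a common preimage in
`A × V`.
-/

universe u

open CategoryTheory Limits

theorem CategoryTheory.IsPullback.prod_map_id_prod_map_id {C : Type*} [Category C]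
    [HasBinaryProducts C] {A B V W : C} (f : A ⟶ B) (g : V ⟶ W) :
    IsPullback (prod.map (𝟙 A) g) (prod.map f (𝟙 V)) (prod.map f (𝟙 W)) (prod.map (𝟙 B) g) := by
  refine .mk' (by simp) (fun T φ φ' h₁ h₂ => ?_) (fun T a b h => ?_)
  · ext
    · simpa using h₁ =≫ prod.fst
    · simpa using h₂ =≫ prod.snd
  · have h₁ : (a ≫ prod.fst) ≫ f = b ≫ prod.fst := by simpa using h =≫ prod.fst
    have h₂ : (b ≫ prod.snd) ≫ g = a ≫ prod.snd := by simpa using (h =≫ prod.snd).symm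
    refine ⟨prod.lift (a ≫ prod.fst) (b ≫ prod.snd), ?_, ?_⟩
    · rw [prod.lift_map, Category.comp_id, h₂, ← prod.comp_lift, prod.lift_fst_snd,
        Category.comp_id]
    · rw [prod.lift_map, Category.comp_id, h₁, ← prod.comp_lift, prod.lift_fst_snd,
        Category.comp_id]

theorem CategoryTheory.Limits.Types.injective_of_isPullback {P X Y Z Q : Type u}
    {t : P ⟶ X} {l : P ⟶ Y} {r : X ⟶ Z} {b : Y ⟶ Z} (hpb : IsPullback t l r b)
    (hr : Function.Injective r) (hb : Function.Injective b) {inl : X ⟶ Q} {inr : Y ⟶ Q}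
    (w : t ≫ inl = l ≫ inr) (hQ : ∀ q, (∃ x, inl x = q) ∨ ∃ y, inr y = q) {d : Q ⟶ Z}
    (hinl : inl ≫ d = r) (hinr : inr ≫ d = b) : Function.Injective d := by
  have hdl (x : X) : d (inl x) = r x := ConcreteCategory.congr_hom hinl x
  have hdr (y : Y) : d (inr y) = b y := ConcreteCategory.congr_hom hinr y
  have glue (x : X) (y : Y) (h : d (inl x) = d (inr y)) : inl x = inr y := by
    obtain ⟨p, rfl, rfl⟩ := Types.exists_of_isPullback hpb x y (by rwa [hdl, hdr] at h)
    exact ConcreteCategory.congr_hom w p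
  intro q q' h
  rcases hQ q with ⟨x, rfl⟩ | ⟨y, rfl⟩ <;> rcases hQ q' with ⟨x', rfl⟩ | ⟨y', rfl⟩
  · exact congrArg inl (hr (by rwa [hdl, hdl] at h))
  · exact glue x y' h
  · exact (glue x' y h.symm).symm
  · exact congrArg inr (hb (by rwa [hdr, hdr] at h))

namespace Profinite

theorem jointly_surjective_of_isPushout {P X Y Q : Profinite.{u}} {t : P ⟶ X} {l : P ⟶ Y}
    {inl : X ⟶ Q} {inr : Y ⟶ Q} (hpo : IsPushout t l inl inr) (q : Q) :
    (∃ x, inl x = q) ∨ ∃ y, inr y = q := by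
  let π : (b : Bool) → cond b X Y ⟶ Q := Bool.rec inr inl
  have : Epi (Limits.Sigma.desc π) := ⟨fun g h H => hpo.hom_ext
    (by simpa [π] using Limits.Sigma.ι _ true ≫= H)
    (by simpa [π] using Limits.Sigma.ι _ false ≫= H)⟩
  have hπ := ((effectiveEpiFamily_tfae _ π).out 1 2).mp this
  obtain ⟨_ | _, z, rfl⟩ := hπ q
  exacts [.inr ⟨z, rfl⟩, .inl ⟨z, rfl⟩]

theorem mono_of_isPullback_of_isPushout {P X Y Z Q : Profinite.{u}}
    {t : P ⟶ X} {l : P ⟶ Y} {r : X ⟶ Z} {b : Y ⟶ Z} (hpb : IsPullback t l r b) [Mono r] [Mono b]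
    {inl : X ⟶ Q} {inr : Y ⟶ Q} (hpo : IsPushout t l inl inr) {d : Q ⟶ Z}
    (hinl : inl ≫ d = r) (hinr : inr ≫ d = b) : Mono d := by
  rw [CompHausLike.mono_iff_injective]
  exact Types.injective_of_isPullback (hpb.map (forget Profinite))
    ((CompHausLike.mono_iff_injective r).1 ‹_›) ((CompHausLike.mono_iff_injective b).1 ‹_›)
    (by rw [← Functor.map_comp, hpo.w, Functor.map_comp]) (jointly_surjective_of_isPushout hpo)
    (by rw [← Functor.map_comp, hinl]) (by rw [← Functor.map_comp, hinr])

end Profinite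

theorem CategoryTheory.NatTrans.mono_of_isPullback_of_isPushout {K : Type*} [Category K]
    {P X Y Z Q : K ⥤ Profinite.{u}}
    {t : P ⟶ X} {l : P ⟶ Y} {r : X ⟶ Z} {b : Y ⟶ Z} (hpb : IsPullback t l r b) [Mono r] [Mono b]
    {inl : X ⟶ Q} {inr : Y ⟶ Q} (hpo : IsPushout t l inl inr) {d : Q ⟶ Z}
    (hinl : inl ≫ d = r) (hinr : inr ≫ d = b) : Mono d := by
  rw [NatTrans.mono_iff_mono_app]
  intro k
  exact Profinite.mono_of_isPullback_of_isPushout (hpb.map ((evaluation K _).obj k))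
    (hpo.map ((evaluation K _).obj k)) (by simp [← hinl]) (by simp [← hinr])

theorem pushoutProduct_mono_of_mono
    (A B V W : SimplicialObject Profinite.{u}) (j : A ⟶ B) (i : V ⟶ W)
    [Mono j] [Mono i]
    (pp : pushout (prod.map (𝟙 A) i) (prod.map j (𝟙 V)) ⟶ B ⨯ W)
    (hl : pushout.inl (prod.map (𝟙 A) i) (prod.map j (𝟙 V)) ≫ pp = prod.map j (𝟙 W))
    (hr : pushout.inr (prod.map (𝟙 A) i) (prod.map j (𝟙 V)) ≫ pp = prod.map (𝟙 B) i) :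
    Mono pp :=
  NatTrans.mono_of_isPullback_of_isPushout (IsPullback.prod_map_id_prod_map_id j i)
    (IsPushout.of_hasPushout _ _) hl hr
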